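/- Let G be a group acting on a set X, both equipped with σ-algebras, such that left translations of G are measurable and, for a fixed basepoint x ∈ X, the orbit map G → X, g ↦ g•x, is measurable. Let μ be a left-invariant measure on G and ν a measure on X satisfying the normalization condition: μ({g ∈ G : g•x ∈ R}) = ν(R) for every measurable set R ⊆ X. Let Γ be a countable subgroup of G whose action on X is free, let D ⊆ X be a measurable set meeting every Γ-orbit in X in exactly one point, and let A ⊆ X be a measurable Γ-invariant set (γ·A = A for all γ ∈ Γ) such that A ∩ D is measurable. Set T = {g ∈ G : g•x ∈ A}. Then: (i) T is measurable and γ·T = T for every γ ∈ Γ; (ii) the coset projection q : G → Γ\G is injective on T' = {g ∈ G : g•x ∈ A ∩ D} and q(T') = q(T); (iii) μ(T') = ν(A ∩ D), and consequently every measurable set S ⊆ G on which q is injective and with q(S) = q(T) satisfies μ(S) = ν(A ∩ D). -/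
import Mathlib


open MeasureTheory Set

/-- The projection `G → Γ\G` onto the space of left cosets `Γg`
(orbits of the left translation action of `Γ` on `G`). -/
def cosetProj {G : Type*} [Group G] (Γ : Subgroup G) :
    G → Quotient (QuotientGroup.rightRel Γ) :=
  Quotient.mk (QuotientGroup.rightRel Γ)

lemma cosetProj_eq_iff {G : Type*} [Group G] (Γ : Subgroup G) (a b : G) :
    cosetProj Γ a = cosetProj Γ b ↔ b * a⁻¹ ∈ Γ := by
  constructor
  · intro h
    exact QuotientGroup.rightRel_apply.mp (Quotient.exact h)
  · intro h
    exact Quotient.sound (QuotientGroup.rightRel_apply.mpr h)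

/-- If `q` is injective on measurable sets `S` and `T'` with the same image,
then they have the same measure (for a left-invariant `μ` and countable `Γ`). -/
lemma measure_eq_of_image_eq {G : Type*} [Group G] [MeasurableSpace G]
    (hmeasL : ∀ γ : G, Measurable fun g : G => γ * g)
    (μ : Measure G)
    (hμinv : ∀ (γ : G) (S : Set G), MeasurableSet S →
      μ ((fun g => γ * g) '' S) = μ S)
    (Γ : Subgroup G) (hΓ : Countable Γ)
    (S T' : Set G) (hS : MeasurableSet S) (hT' : MeasurableSet T')
    (hSinj : Set.InjOn (cosetProj Γ) S)
    (hT'inj : Set.InjOn (cosetProj Γ) T')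
    (him : cosetProj Γ '' S = cosetProj Γ '' T') :
    μ S = μ T' := by
  haveI := hΓ
  set f : Γ → Set G := fun γ => S ∩ (fun g => (γ : G) * g) ⁻¹' T' with hf
  have hfmeas : ∀ γ : Γ, MeasurableSet (f γ) := fun γ =>
    hS.inter ((hmeasL γ) hT')
  have hfdisj : Pairwise (Function.onFun Disjoint f) := by
    intro γ γ' hne
    rw [Function.onFun, Set.disjoint_left]
    rintro g ⟨hgS, hgT⟩ ⟨hgS', hgT'⟩
    apply hne
    have h1 : cosetProj Γ ((γ : G) * g) = cosetProj Γ ((γ' : G) * g) := by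
      rw [cosetProj_eq_iff]
      have : (γ' : G) * g * ((γ : G) * g)⁻¹ = (γ' : G) * (γ : G)⁻¹ := by
        group
      rw [this]
      exact mul_mem γ'.2 (inv_mem γ.2)
    have := hT'inj hgT hgT' h1
    ext
    exact mul_right_cancel this
  have hfunion : (⋃ γ : Γ, f γ) = S := by
    ext g
    simp only [mem_iUnion, hf, mem_inter_iff, mem_preimage]
    constructor
    · rintro ⟨γ, hgS, _⟩; exact hgS
    · intro hgS
      have : cosetProj Γ g ∈ cosetProj Γ '' T' := him ▸ mem_image_of_mem _ hgS
      obtain ⟨t, htT', hqt⟩ := this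
      have hmem : t * g⁻¹ ∈ Γ := (cosetProj_eq_iff Γ g t).mp hqt.symm
      refine ⟨⟨t * g⁻¹, hmem⟩, hgS, ?_⟩
      simpa using htT'
  have himgmeas : ∀ γ : Γ, MeasurableSet ((fun g => (γ : G) * g) '' f γ) := by
    intro γ
    have : (fun g => (γ : G) * g) '' f γ = (fun g => (γ : G)⁻¹ * g) ⁻¹' f γ := by
      ext g
      simp only [mem_image, mem_preimage]
      constructor
      · rintro ⟨h, hh, rfl⟩; simpa using hh
      · intro h; exact ⟨(γ : G)⁻¹ * g, h, by group⟩
    rw [this]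
    exact (hmeasL _) (hfmeas γ)
  have himgdisj : Pairwise (Function.onFun Disjoint
      fun γ : Γ => (fun g => (γ : G) * g) '' f γ) := by
    intro γ γ' hne
    rw [Function.onFun, Set.disjoint_left]
    rintro g ⟨a, ⟨haS, _⟩, rfl⟩ ⟨b, ⟨hbS, _⟩, hb⟩
    apply hne
    have hb' : (γ' : G) * b = (γ : G) * a := hb
    have hq : cosetProj Γ a = cosetProj Γ b := by
      rw [cosetProj_eq_iff]
      have : b = (γ' : G)⁻¹ * ((γ : G) * a) := by rw [← hb']; group
      rw [this]
      have : (γ' : G)⁻¹ * ((γ : G) * a) * a⁻¹ = (γ' : G)⁻¹ * (γ : G) := by group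
      rw [this]
      exact mul_mem (inv_mem γ'.2) γ.2
    have hab : a = b := hSinj haS hbS hq
    subst hab
    ext
    exact mul_right_cancel hb'.symm
  have himgunion : (⋃ γ : Γ, (fun g => (γ : G) * g) '' f γ) = T' := by
    ext t
    simp only [mem_iUnion, mem_image]
    constructor
    · rintro ⟨γ, a, ⟨_, ha⟩, rfl⟩
      simpa using ha
    · intro htT'
      have : cosetProj Γ t ∈ cosetProj Γ '' S := him.symm ▸ mem_image_of_mem _ htT'
      obtain ⟨g, hgS, hqg⟩ := this
      have hmem : t * g⁻¹ ∈ Γ := (cosetProj_eq_iff Γ g t).mp hqg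
      refine ⟨⟨t * g⁻¹, hmem⟩, g, ⟨hgS, ?_⟩, by group⟩
      simpa using htT'
  calc μ S = μ (⋃ γ : Γ, f γ) := by rw [hfunion]
    _ = ∑' γ : Γ, μ (f γ) := measure_iUnion hfdisj hfmeas
    _ = ∑' γ : Γ, μ ((fun g => (γ : G) * g) '' f γ) := by
        refine tsum_congr fun γ => (hμinv (γ : G) (f γ) (hfmeas γ)).symm
    _ = μ (⋃ γ : Γ, (fun g => (γ : G) * g) '' f γ) :=
        (measure_iUnion himgdisj himgmeas).symm
    _ = μ T' := by rw [himgunion]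
/-- Abstract form of the paper's Lemma: let `G` act on `X`, with left
translations of `G` measurable and the orbit map `g ↦ g • x` measurable, let
`μ` be a left-invariant measure on `G` and `ν` a measure on `X` with the
normalization `μ {g : g • x ∈ R} = ν R` for all measurable `R`. Let `Γ ≤ G` be
a countable subgroup acting freely on `X`, `D` a measurable transversal for the
`Γ`-action on `X`, and `A` a `Γ`-invariant measurable set. Set
`T = {g : g • x ∈ A}`. Then (i) `T` is measurable and `Γ`-invariant,
(ii) the coset projection `q` is injective on `T' = {g : g • x ∈ A ∩ D}` and
`q(T') = q(T)`, and (iii) `μ(T') = ν(A ∩ D)`; consequently any measurable `S`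
on which `q` is injective with `q(S) = q(T)` satisfies `μ(S) = ν(A ∩ D)`. -/
theorem meas_lemma
    {G X : Type*} [Group G] [MeasurableSpace G] [MeasurableSpace X]
    [MulAction G X]
    (hmeasL : ∀ γ : G, Measurable fun g : G => γ * g)
    (x : X) (hmeasOrbit : Measurable fun g : G => g • x)
    (μ : Measure G) (ν : Measure X)
    (hμinv : ∀ (γ : G) (S : Set G), MeasurableSet S →
      μ ((fun g => γ * g) '' S) = μ S)
    (hnorm : ∀ R : Set X, MeasurableSet R → μ {g : G | g • x ∈ R} = ν R)
    (Γ : Subgroup G) (hΓ : Countable Γ)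
    (hfree : ∀ γ ∈ Γ, ∀ p : X, γ • p = p → γ = 1)
    (D : Set X) (hD : MeasurableSet D)
    (htrans : ∀ p : X, ∃! d, d ∈ D ∧ ∃ γ ∈ Γ, γ • p = d)
    (A : Set X) (hA : MeasurableSet A)
    (hAinv : ∀ γ ∈ Γ, (fun p : X => γ • p) '' A = A)
    (hAD : MeasurableSet (A ∩ D))
    (T T' : Set G)
    (hT : T = {g : G | g • x ∈ A})
    (hT' : T' = {g : G | g • x ∈ A ∩ D}) :
    (MeasurableSet T ∧ ∀ γ ∈ Γ, (fun g => γ * g) '' T = T) ∧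
    (Set.InjOn (cosetProj Γ) T' ∧ cosetProj Γ '' T' = cosetProj Γ '' T) ∧
    (μ T' = ν (A ∩ D) ∧
      ∀ S : Set G, MeasurableSet S → Set.InjOn (cosetProj Γ) S →
        cosetProj Γ '' S = cosetProj Γ '' T → μ S = ν (A ∩ D)) := by
  -- membership in A is Γ-invariant
  have hmemA : ∀ γ ∈ Γ, ∀ p : X, p ∈ A ↔ γ • p ∈ A := by
    intro γ hγ p
    constructor
    · intro hp
      rw [← hAinv γ hγ]
      exact mem_image_of_mem _ hp
    · intro hp
      have := hAinv γ hγ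
      rw [← this] at hp
      obtain ⟨q, hq, hqe⟩ := hp
      have : q = p := smul_left_cancel γ hqe
      rwa [← this]
  -- (i)
  have hTmeas : MeasurableSet T := by
    rw [hT]; exact hmeasOrbit hA
  have hTinv : ∀ γ ∈ Γ, (fun g => γ * g) '' T = T := by
    intro γ hγ
    ext g
    simp only [hT, mem_image, mem_setOf_eq]
    constructor
    · rintro ⟨h, hh, rfl⟩
      rw [mul_smul]
      exact (hmemA γ hγ (h • x)).mp hh
    · intro hg
      refine ⟨γ⁻¹ * g, ?_, by group⟩
      rw [mul_smul]
      have := (hmemA γ hγ (γ⁻¹ • g • x)).mpr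
      apply this
      rwa [smul_inv_smul]
  -- (ii) injectivity
  have hT'meas : MeasurableSet T' := by rw [hT']; exact hmeasOrbit hAD
  have hT'inj : Set.InjOn (cosetProj Γ) T' := by
    intro g hg h hh hq
    rw [hT', mem_setOf_eq] at hg hh
    have hγ : h * g⁻¹ ∈ Γ := (cosetProj_eq_iff Γ g h).mp hq
    have hhg : (h * g⁻¹) • (g • x) = h • x := by
      rw [← mul_smul]; group
    -- both g•x and h•x are in D and in the same Γ-orbit of g•x
    obtain ⟨d, _, hdu⟩ := htrans (g • x)
    have h1 : g • x = d := hdu (g • x) ⟨hg.2, 1, one_mem Γ, one_smul G _⟩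
    have h2 : h • x = d := hdu (h • x) ⟨hh.2, h * g⁻¹, hγ, hhg⟩
    have heq : (h * g⁻¹) • (g • x) = g • x := by rw [hhg, h2, ← h1]
    have := hfree (h * g⁻¹) hγ (g • x) heq
    have : h = g := by
      have h3 : h * g⁻¹ * g = 1 * g := by rw [this]
      simpa using h3
    rw [this]
  -- (ii) image equality
  have himT : cosetProj Γ '' T' = cosetProj Γ '' T := by
    apply Set.Subset.antisymm
    · apply Set.image_mono
      rw [hT, hT']
      exact fun g hg => hg.1
    · rintro _ ⟨g, hg, rfl⟩
      rw [hT, mem_setOf_eq] at hg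
      obtain ⟨d, ⟨hdD, γ, hγ, hγd⟩, _⟩ := htrans (g • x)
      refine ⟨γ * g, ?_, ?_⟩
      · rw [hT', mem_setOf_eq, mul_smul, hγd]
        exact ⟨hγd ▸ (hmemA γ hγ (g • x)).mp hg, hdD⟩
      · exact ((cosetProj_eq_iff Γ g (γ * g)).mpr (by simpa using hγ)).symm
  -- (iii)
  have hμT' : μ T' = ν (A ∩ D) := by rw [hT']; exact hnorm _ hAD
  refine ⟨⟨hTmeas, hTinv⟩, ⟨hT'inj, himT⟩, hμT', ?_⟩
  intro S hSmeas hSinj hSim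
  rw [← hμT']
  exact measure_eq_of_image_eq hmeasL μ hμinv Γ hΓ S T' hSmeas hT'meas hSinj
    hT'inj (hSim.trans himT.symm)
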